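/- Let A > 1 and p > 1, let γ be the smallest root of φ(s) = s^p − A(1 − p + p s), let 𝓔 = { α ∈ L^p(0,1) : α ≥ 0 a.e., ‖α‖_{L^p} ≤ 1, and (1/h) ∫_0^h α(s)^p ds ≤ A ( (1/h) ∫_0^h α(s) ds )^p for all h ∈ (0,1] }, and define ξ(τ) = max { ∫_0^τ α(s) ds : α ∈ 𝓔 } for τ ∈ (0,1] and ξ(0) = 0. Then there is a constant C = C(A,p) > 0 such that ξ(τ) ≤ C τ^γ for all τ ∈ [0,1]. -/

import Mathlib

open MeasureTheory Set intervalIntegral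

noncomputable section

/-- Lebesgue measure restricted to `(0,1)`. -/
def mu01 : Measure ℝ := volume.restrict (Ioo 0 1)

/-- The set `𝓔` of nonnegative `α ∈ L^p(0,1)` with `‖α‖_p ≤ 1` satisfying the reverse Hölder
condition `(1/h)∫_0^h α^p ≤ A((1/h)∫_0^h α)^p` for all `h ∈ (0,1]`. -/
def calE (A p : ℝ) : Set (Lp ℝ (ENNReal.ofReal p) mu01) :=
  {f | (∀ᵐ s ∂mu01, 0 ≤ f s) ∧ ‖f‖ ≤ 1 ∧
    ∀ h ∈ Ioc (0:ℝ) 1,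
      (1 / h) * ∫ s in (0:ℝ)..h, f s ^ p ≤ A * ((1 / h) * ∫ s in (0:ℝ)..h, f s) ^ p}


/-- `ξ(τ) = max{∫_0^τ α : α ∈ 𝓔}` (expressed as a supremum); note `ξ(0) = 0`. -/
def xiFn (A p : ℝ) : ℝ → ℝ :=
  fun τ => sSup ((fun f : Lp ℝ (ENNReal.ofReal p) mu01 => ∫ s in (0:ℝ)..τ, f s) '' calE A p)

/-!
With `Y h = ∫₀ʰ α` and `Q h = ∫₀ʰ α ^ p`, the function
`Ψ h = h ^ (-γp) * (h ^ (p-1) * Q h - γ ^ (p-1) * Y h ^ p)` is absolutely continuous on `[τ, 1]`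
and nondecreasing: at almost every `h`, Young's inequality gives
`h ^ (γp+1) * Ψ' h ≥ (p - 1 - γp) * h ^ (p-1) * Q h + γ ^ p * Y h ^ p`, and the reverse
Hölder condition `h ^ (p-1) * Q h ≤ A * Y h ^ p` bounds this below by
`(γ ^ p - A(1 - p + pγ)) * Y h ^ p = 0`.
Hence `Ψ τ ≤ Ψ 1 ≤ ‖α‖_p ^ p ≤ 1`, while Jensen's inequality `Y τ ^ p ≤ τ ^ (p-1) * Q τ` gives
`Ψ τ ≥ (1 - γ ^ (p-1)) * τ ^ (-γp) * Y τ ^ p`. As `φ 0 > 0 > φ 1`, the smallest root satisfies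
`γ < 1`, so `Y τ ≤ (1 - γ ^ (p-1)) ^ (-1/p) * τ ^ γ`.
-/

open Filter Topology

namespace AbsolutelyContinuousOnInterval

variable {a b : ℝ}

theorem comp_lipschitzOnWith {X Z : Type*} [PseudoMetricSpace X] [PseudoMetricSpace Z]
    {f : ℝ → X} {g : X → Z} {K : NNReal} {s : Set X} (hg : LipschitzOnWith K g s)
    (hfs : MapsTo f (uIcc a b) s) (hf : AbsolutelyContinuousOnInterval f a b) :
    AbsolutelyContinuousOnInterval (g ∘ f) a b := by
  have hK : Tendsto (fun E : ℕ × (ℕ → ℝ × ℝ) ↦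
      K * ∑ i ∈ Finset.range E.1, dist (f (E.2 i).1) (f (E.2 i).2))
      (totalLengthFilter ⊓ 𝓟 (disjWithin a b)) (𝓝 0) := by
    simpa using Tendsto.const_mul (K : ℝ) hf
  refine squeeze_zero' (Eventually.of_forall fun _ ↦ Finset.sum_nonneg fun _ _ ↦ dist_nonneg)
    ?_ hK
  filter_upwards [mem_inf_of_right (mem_principal_self _)] with E hE
  rw [Finset.mul_sum]
  refine Finset.sum_le_sum fun i hi ↦ ?_
  exact hg.dist_le_mul _ (hfs (hE.1 i hi).1) _ (hfs (hE.1 i hi).2)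

variable {f : ℝ → ℝ}

theorem comp_contDiff {g : ℝ → ℝ} (hg : ContDiff ℝ 1 g)
    (hf : AbsolutelyContinuousOnInterval f a b) :
    AbsolutelyContinuousOnInterval (g ∘ f) a b := by
  obtain ⟨C, hC⟩ := hf.exists_bound
  obtain ⟨K, hK⟩ := hg.contDiffOn.exists_lipschitzOnWith one_ne_zero
    (convex_closedBall 0 C) (isCompact_closedBall 0 C)
  exact hf.comp_lipschitzOnWith hK fun x hx ↦ mem_closedBall_zero_iff.2 (hC x hx)

theorem le_of_ae_deriv_nonneg (hf : AbsolutelyContinuousOnInterval f a b) (hab : a ≤ b)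
    (hf' : ∀ᵐ x, x ∈ Icc a b → 0 ≤ deriv f x) : f a ≤ f b := by
  rw [← sub_nonneg, ← hf.integral_deriv_eq_sub]
  exact integral_nonneg_of_ae_restrict hab ((ae_restrict_iff' measurableSet_Icc).2 hf')

end AbsolutelyContinuousOnInterval

theorem Real.mul_rpow_sub_one_mul_le {p x y : ℝ} (hp : 1 < p) (hx : 0 ≤ x) (hy : 0 ≤ y) :
    p * y ^ (p - 1) * x ≤ x ^ p + (p - 1) * y ^ p := by
  have hpq : p.HolderConjugate (p / (p - 1)) := .conjExponent hp
  have hyoung := Real.young_inequality_of_nonneg hx (Real.rpow_nonneg hy (p - 1)) hpq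
  rw [← Real.rpow_mul hy, mul_div_cancel₀ _ (sub_ne_zero.2 hp.ne')] at hyoung
  have hp0 : 0 < p := by linarith
  calc p * y ^ (p - 1) * x = p * (x * y ^ (p - 1)) := by ring
    _ ≤ p * (x ^ p / p + y ^ p / (p / (p - 1))) := by gcongr
    _ = x ^ p + (p - 1) * y ^ p := by field_simp

theorem rpow_intervalIntegral_le {p a b : ℝ} {α : ℝ → ℝ} (hp : 1 ≤ p) (hab : a < b)
    (hα0 : ∀ᵐ s ∂volume.restrict (Ioc a b), 0 ≤ α s) (hα : IntegrableOn α (Ioc a b))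
    (hαp : IntegrableOn (fun s ↦ α s ^ p) (Ioc a b)) :
    (∫ s in a..b, α s) ^ p ≤ (b - a) ^ (p - 1) * ∫ s in a..b, α s ^ p := by
  have hba : 0 < b - a := sub_pos.2 hab
  have hjensen := (convexOn_rpow hp).map_set_average_le
    (continuousOn_id.rpow_const fun _ _ ↦ Or.inr (by linarith)) isClosed_Ici
    (by simpa using hab) (by simp) hα0 hα hαp
  simp only [setAverage_eq, measureReal_def, Real.volume_Ioc, ENNReal.toReal_ofReal hba.le]
    at hjensen
  rw [smul_eq_mul, smul_eq_mul, Real.mul_rpow (by positivity)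
    (setIntegral_nonneg_of_ae_restrict hα0), Real.inv_rpow hba.le,
    inv_mul_le_iff₀ (by positivity), ← mul_assoc, ← div_eq_mul_inv, ← Real.rpow_sub_one hba.ne']
    at hjensen
  rwa [intervalIntegral.integral_of_le hab.le, intervalIntegral.integral_of_le hab.le]

theorem intervalIntegral_nonneg_of_ae_restrict_Ioc {α : ℝ → ℝ} {a b h : ℝ}
    (hα0 : ∀ᵐ s ∂volume.restrict (Ioc a b), 0 ≤ α s) (hh : h ∈ Icc a b) :
    0 ≤ ∫ s in a..h, α s := by
  rw [intervalIntegral.integral_of_le hh.1]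
  exact setIntegral_nonneg_of_ae_restrict
    (ae_restrict_of_ae_restrict_of_subset (Ioc_subset_Ioc_right hh.2) hα0)

def lyapunov (p γ : ℝ) (Y Q : ℝ → ℝ) (h : ℝ) : ℝ :=
  h ^ (-(γ * p)) * (h ^ (p - 1) * Q h - γ ^ (p - 1) * Y h ^ p)

theorem lyapunov_hasDerivAt {p γ x a : ℝ} {Y Q : ℝ → ℝ} (hγ : 0 < γ) (hp : 1 < p)
    (hx : 0 < x) (ha : 0 ≤ a) (hY : HasDerivAt Y a x) (hQ : HasDerivAt Q (a ^ p) x) :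
    HasDerivAt (lyapunov p γ Y Q)
      (x ^ (-(γ * p) - 1) * ((p - 1 - γ * p) * (x ^ (p - 1) * Q x) + (x * a) ^ p
        - p * γ ^ (p - 1) * Y x ^ (p - 1) * (x * a) + p * γ ^ p * Y x ^ p)) x := by
  refine ((Real.hasDerivAt_rpow_const (p := -(γ * p)) (Or.inl hx.ne')).fun_mul
    (((Real.hasDerivAt_rpow_const (p := p - 1) (Or.inl hx.ne')).fun_mul hQ).fun_sub
      ((hY.rpow_const (Or.inr hp.le)).const_mul (γ ^ (p - 1))))).congr_deriv ?_
  have e1 : x ^ (-(γ * p)) = x ^ (-(γ * p) - 1) * x := by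
    rw [← Real.rpow_add_one hx.ne', sub_add_cancel]
  have e2 : x ^ (p - 1) = x ^ (p - 1 - 1) * x := by
    rw [← Real.rpow_add_one hx.ne', sub_add_cancel]
  have e3 : x ^ p = x ^ (p - 1) * x := by
    rw [← Real.rpow_add_one hx.ne', sub_add_cancel]
  have e4 : γ ^ p = γ ^ (p - 1) * γ := by
    rw [← Real.rpow_add_one hγ.ne', sub_add_cancel]
  rw [Real.mul_rpow hx.le ha]
  linear_combination ((p - 1) * x ^ (p - 1 - 1) * Q x + x ^ (p - 1) * a ^ p
      - γ ^ (p - 1) * (a * p * Y x ^ (p - 1))) * e1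
    - x ^ (-(γ * p) - 1) * (p - 1) * Q x * e2 - x ^ (-(γ * p) - 1) * a ^ p * e3
    - x ^ (-(γ * p) - 1) * p * Y x ^ p * e4

theorem lyapunov_deriv_numerator_nonneg {A p γ X y b : ℝ} (hA : 0 < A) (hp : 1 < p) (hγ : 0 < γ)
    (hroot : γ ^ p = A * (1 - p + p * γ)) (hy : 0 ≤ y) (hb : 0 ≤ b) (hX : X ≤ A * y ^ p) :
    0 ≤ (p - 1 - γ * p) * X + b ^ p - p * γ ^ (p - 1) * y ^ (p - 1) * b + p * γ ^ p * y ^ p := by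
  have hyoung := Real.mul_rpow_sub_one_mul_le hp hb (mul_nonneg hγ.le hy)
  rw [Real.mul_rpow hγ.le hy, Real.mul_rpow hγ.le hy] at hyoung
  have hslope : p - 1 - γ * p ≤ 0 := by
    have : 0 ≤ A * (1 - p + p * γ) := hroot ▸ Real.rpow_nonneg hγ.le p
    linarith [nonneg_of_mul_nonneg_right this hA]
  have hXy := mul_le_mul_of_nonpos_left hX hslope
  linear_combination hyoung + hXy - y ^ p * hroot

theorem absolutelyContinuousOnInterval_lyapunov {p γ a b : ℝ} {Y Q : ℝ → ℝ} (hp : 1 < p)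
    (ha : 0 < a) (hb : 0 < b) (hY : AbsolutelyContinuousOnInterval Y a b)
    (hQ : AbsolutelyContinuousOnInterval Q a b) :
    AbsolutelyContinuousOnInterval (lyapunov p γ Y Q) a b := by
  have hpow : ∀ r : ℝ, AbsolutelyContinuousOnInterval (fun x ↦ x ^ r) a b := by
    intro r
    apply ContDiffOn.absolutelyContinuousOnInterval
    intro x hx
    exact (Real.contDiffAt_rpow_const_of_ne
      (lt_of_lt_of_le (lt_min ha hb) hx.1).ne').contDiffWithinAt
  have hYp : AbsolutelyContinuousOnInterval (fun x ↦ Y x ^ p) a b :=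
    hY.comp_contDiff (g := fun y ↦ y ^ p)
      (Real.contDiff_rpow_const_of_le (n := 1) (by simpa using hp.le))
  have hΦ : AbsolutelyContinuousOnInterval
      (fun x ↦ x ^ (p - 1) * Q x - γ ^ (p - 1) * Y x ^ p) a b :=
    ((hpow (p - 1)).fun_mul hQ).fun_sub (hYp.const_mul (γ ^ (p - 1)))
  exact (hpow (-(γ * p))).fun_mul hΦ

theorem lyapunov_intervalIntegral_le_one {A p γ τ : ℝ} {α : ℝ → ℝ} (hA : 0 < A)
    (hp : 1 < p) (hγ : 0 < γ) (hroot : γ ^ p = A * (1 - p + p * γ))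
    (hα0 : ∀ᵐ s ∂volume.restrict (Ioc 0 1), 0 ≤ α s) (hα : IntegrableOn α (Ioc 0 1))
    (hαp : IntegrableOn (fun s ↦ α s ^ p) (Ioc 0 1))
    (hcon : ∀ h ∈ Ioc (0 : ℝ) 1,
      h ^ (p - 1) * ∫ s in (0:ℝ)..h, α s ^ p ≤ A * (∫ s in (0:ℝ)..h, α s) ^ p)
    (hτ0 : 0 < τ) (hτ1 : τ ≤ 1) :
    lyapunov p γ (fun h ↦ ∫ s in (0:ℝ)..h, α s) (fun h ↦ ∫ s in (0:ℝ)..h, α s ^ p) τ ≤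
      lyapunov p γ (fun h ↦ ∫ s in (0:ℝ)..h, α s) (fun h ↦ ∫ s in (0:ℝ)..h, α s ^ p) 1 := by
  have hα' : IntervalIntegrable α volume 0 1 :=
    (intervalIntegrable_iff_integrableOn_Ioc_of_le zero_le_one).2 hα
  have hαp' : IntervalIntegrable (fun s ↦ α s ^ p) volume 0 1 :=
    (intervalIntegrable_iff_integrableOn_Ioc_of_le zero_le_one).2 hαp
  have hsub : uIcc τ 1 ⊆ uIcc 0 1 := by
    rw [uIcc_of_le hτ1, uIcc_of_le zero_le_one]; exact Icc_subset_Icc_left hτ0.le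
  refine (absolutelyContinuousOnInterval_lyapunov hp hτ0 one_pos
    ((hα'.absolutelyContinuousOnInterval_intervalIntegral left_mem_uIcc).mono hsub)
    ((hαp'.absolutelyContinuousOnInterval_intervalIntegral left_mem_uIcc).mono hsub)
    ).le_of_ae_deriv_nonneg hτ1 ?_
  filter_upwards [hα'.ae_hasDerivAt_integral, hαp'.ae_hasDerivAt_integral,
    (ae_restrict_iff' measurableSet_Ioc).1 hα0] with x hYx hQx hαx hx
  have hx' : x ∈ Ioc (0 : ℝ) 1 := ⟨hτ0.trans_le hx.1, hx.2⟩
  have hx'' : x ∈ uIcc (0 : ℝ) 1 := hsub (by rwa [uIcc_of_le hτ1])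
  rw [(lyapunov_hasDerivAt hγ hp hx'.1 (hαx hx') (hYx hx'' 0 left_mem_uIcc)
    (hQx hx'' 0 left_mem_uIcc)).deriv]
  exact mul_nonneg (Real.rpow_nonneg hx'.1.le _) (lyapunov_deriv_numerator_nonneg hA hp hγ hroot
    (intervalIntegral_nonneg_of_ae_restrict_Ioc hα0 (Ioc_subset_Icc_self hx'))
    (mul_nonneg hx'.1.le (hαx hx')) (hcon x hx'))

theorem one_sub_mul_rpow_intervalIntegral_le {A p γ τ : ℝ} {α : ℝ → ℝ} (hA : 0 < A)
    (hp : 1 < p) (hγ : 0 < γ) (hroot : γ ^ p = A * (1 - p + p * γ))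
    (hα0 : ∀ᵐ s ∂volume.restrict (Ioc 0 1), 0 ≤ α s) (hα : IntegrableOn α (Ioc 0 1))
    (hαp : IntegrableOn (fun s ↦ α s ^ p) (Ioc 0 1))
    (hcon : ∀ h ∈ Ioc (0 : ℝ) 1,
      h ^ (p - 1) * ∫ s in (0:ℝ)..h, α s ^ p ≤ A * (∫ s in (0:ℝ)..h, α s) ^ p)
    (hτ0 : 0 < τ) (hτ1 : τ ≤ 1) :
    (1 - γ ^ (p - 1)) * (∫ s in (0:ℝ)..τ, α s) ^ p ≤ τ ^ (γ * p) * ∫ s in (0:ℝ)..1, α s ^ p := by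
  have hmono := lyapunov_intervalIntegral_le_one hA hp hγ hroot hα0 hα hαp hcon hτ0 hτ1
  set Y : ℝ → ℝ := fun h ↦ ∫ s in (0:ℝ)..h, α s
  set Q : ℝ → ℝ := fun h ↦ ∫ s in (0:ℝ)..h, α s ^ p
  have hjensen : Y τ ^ p ≤ τ ^ (p - 1) * Q τ := by
    simpa only [sub_zero] using rpow_intervalIntegral_le hp.le hτ0
      (ae_restrict_of_ae_restrict_of_subset (Ioc_subset_Ioc_right hτ1) hα0)
      (hα.mono_set (Ioc_subset_Ioc_right hτ1)) (hαp.mono_set (Ioc_subset_Ioc_right hτ1))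
  have hY1 : 0 ≤ γ ^ (p - 1) * Y 1 ^ p := mul_nonneg (Real.rpow_nonneg hγ.le _)
    (Real.rpow_nonneg (intervalIntegral_nonneg_of_ae_restrict_Ioc hα0 ⟨zero_le_one, le_rfl⟩) p)
  have hτβ : τ ^ (γ * p) * τ ^ (-(γ * p)) = 1 := by
    rw [← Real.rpow_add hτ0, add_neg_cancel, Real.rpow_zero]
  simp only [lyapunov, Real.one_rpow, one_mul] at hmono
  calc (1 - γ ^ (p - 1)) * Y τ ^ p
      = τ ^ (γ * p) * (τ ^ (-(γ * p)) * (Y τ ^ p - γ ^ (p - 1) * Y τ ^ p)) := by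
        rw [← mul_assoc, hτβ]; ring
    _ ≤ τ ^ (γ * p) * (τ ^ (-(γ * p)) * (τ ^ (p - 1) * Q τ - γ ^ (p - 1) * Y τ ^ p)) := by
        gcongr
    _ ≤ τ ^ (γ * p) * Q 1 := by gcongr; linarith

theorem pos_of_rpow_sub_mul_eq_zero {A p γ : ℝ} (hA : 0 < A) (hp : 1 < p) (hγ0 : 0 ≤ γ)
    (hroot : γ ^ p - A * (1 - p + p * γ) = 0) : 0 < γ := by
  refine hγ0.lt_of_ne fun h ↦ ?_
  rw [← h, Real.zero_rpow (by linarith)] at hroot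
  nlinarith

theorem lt_one_of_forall_root_le {A p γ : ℝ} (hA : 1 < A) (hp : 1 < p)
    (hγmin : ∀ s : ℝ, 0 ≤ s → s ^ p - A * (1 - p + p * s) = 0 → γ ≤ s) : γ < 1 := by
  have hφ : ContinuousOn (fun s : ℝ ↦ s ^ p - A * (1 - p + p * s)) (Icc 0 1) :=
    ((Real.continuous_rpow_const (by linarith)).sub (by fun_prop)).continuousOn
  have hsign : (0 : ℝ) ∈ Icc (1 ^ p - A * (1 - p + p * 1)) (0 ^ p - A * (1 - p + p * 0)) := by
    rw [Real.one_rpow, Real.zero_rpow (by linarith)]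
    constructor <;> nlinarith
  obtain ⟨s, hs, hφs⟩ := intermediate_value_Icc' zero_le_one hφ hsign
  have hs1 : s ≠ 1 := by
    rintro rfl
    simp only [Real.one_rpow] at hφs
    linarith
  exact (hγmin s hs.1 hφs).trans_lt (hs.2.lt_of_ne hs1)

theorem MeasureTheory.Lp.integral_norm_rpow_le_one {α E : Type*} [MeasurableSpace α]
    [NormedAddCommGroup E] {μ : Measure α} {p : ℝ} (hp : 0 < p)
    {f : Lp E (ENNReal.ofReal p) μ} (hf : ‖f‖ ≤ 1) : ∫ x, ‖f x‖ ^ p ∂μ ≤ 1 := by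
  rw [Lp.norm_def, (Lp.memLp f).eLpNorm_eq_integral_rpow_norm (by simpa using hp) (by simp),
    ENNReal.toReal_ofReal hp.le, ENNReal.toReal_ofReal (by positivity)] at hf
  simpa using (Real.rpow_inv_le_iff_of_pos (integral_nonneg fun _ ↦ by positivity) zero_le_one
    hp).1 hf

theorem restrict_Ioc_eq_mu01 : volume.restrict (Ioc (0 : ℝ) 1) = mu01 :=
  (Measure.restrict_congr_set Ioo_ae_eq_Ioc).symm

theorem rpow_sub_one_mul_le_of_average_le {A p h Q Y : ℝ} (hh : 0 < h) (hY : 0 ≤ Y)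
    (hcon : 1 / h * Q ≤ A * (1 / h * Y) ^ p) : h ^ (p - 1) * Q ≤ A * Y ^ p := by
  rw [Real.mul_rpow (one_div_nonneg.2 hh.le) hY, one_div, Real.inv_rpow hh.le] at hcon
  have hhp : 0 < h ^ p := Real.rpow_pos_of_pos hh p
  calc h ^ (p - 1) * Q = h ^ p * (h⁻¹ * Q) := by rw [Real.rpow_sub_one hh.ne']; ring
    _ ≤ h ^ p * (A * ((h ^ p)⁻¹ * Y ^ p)) := by gcongr
    _ = A * Y ^ p := by field_simp

theorem intervalIntegral_le_of_mem_calE {A p γ τ : ℝ} {f : Lp ℝ (ENNReal.ofReal p) mu01}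
    (hA : 0 < A) (hp : 1 < p) (hγ : 0 < γ) (hc : 0 < 1 - γ ^ (p - 1))
    (hroot : γ ^ p = A * (1 - p + p * γ)) (hf : f ∈ calE A p) (hτ : τ ∈ Icc (0 : ℝ) 1) :
    ∫ s in (0:ℝ)..τ, f s ≤ ((1 - γ ^ (p - 1))⁻¹) ^ p⁻¹ * τ ^ γ := by
  obtain ⟨hf0, hfnorm, hfcon⟩ := hf
  replace hf0 : ∀ᵐ s ∂volume.restrict (Ioc 0 1), 0 ≤ f s := by rwa [restrict_Ioc_eq_mu01]
  have hmem : MemLp f (ENNReal.ofReal p) (volume.restrict (Ioc 0 1)) := by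
    rw [restrict_Ioc_eq_mu01]; exact Lp.memLp f
  have hnorm_rpow : (fun s ↦ ‖f s‖ ^ p) =ᵐ[volume.restrict (Ioc 0 1)] fun s ↦ f s ^ p := by
    filter_upwards [hf0] with s hs using by rw [Real.norm_of_nonneg hs]
  have hfp : IntegrableOn (fun s ↦ f s ^ p) (Ioc 0 1) := by
    have := hmem.integrable_norm_rpow (by simp; linarith) (by simp)
    rw [ENNReal.toReal_ofReal (by linarith)] at this
    exact this.congr hnorm_rpow
  have hQ1 : ∫ s in (0:ℝ)..1, f s ^ p ≤ 1 := by
    rw [intervalIntegral.integral_of_le zero_le_one, ← integral_congr_ae hnorm_rpow,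
      restrict_Ioc_eq_mu01]
    exact Lp.integral_norm_rpow_le_one (by linarith) hfnorm
  have hcon : ∀ h ∈ Ioc (0 : ℝ) 1,
      h ^ (p - 1) * ∫ s in (0:ℝ)..h, f s ^ p ≤ A * (∫ s in (0:ℝ)..h, f s) ^ p := fun h hh ↦
    rpow_sub_one_mul_le_of_average_le hh.1
      (intervalIntegral_nonneg_of_ae_restrict_Ioc hf0 (Ioc_subset_Icc_self hh)) (hfcon h hh)
  rcases hτ.1.eq_or_lt with rfl | hτ0
  · simp [Real.zero_rpow hγ.ne']
  have hcore := one_sub_mul_rpow_intervalIntegral_le hA hp hγ hroot hf0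
    (hmem.integrable (ENNReal.one_le_ofReal.2 hp.le)) hfp hcon hτ0 hτ.2
  have hY := intervalIntegral_nonneg_of_ae_restrict_Ioc hf0 hτ
  have hτp : τ ^ γ = (τ ^ (γ * p)) ^ p⁻¹ := by
    rw [← Real.rpow_mul hτ0.le, mul_inv_cancel_right₀ (by linarith)]
  rw [hτp, ← Real.mul_rpow (by positivity) (by positivity),
    Real.le_rpow_inv_iff_of_pos hY (by positivity) (by linarith), le_inv_mul_iff₀ hc]
  exact hcore.trans (mul_le_of_le_one_right (by positivity) hQ1)

theorem xi_power_bound_general (A p : ℝ) (hA : 1 < A) (hp : 1 < p)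
    (γ : ℝ) (hγ0 : 0 ≤ γ)
    (hγroot : γ ^ p - A * (1 - p + p * γ) = 0)
    (hγmin : ∀ s : ℝ, 0 ≤ s → s ^ p - A * (1 - p + p * s) = 0 → γ ≤ s) :
    ∃ C > (0:ℝ), ∀ τ ∈ Icc (0:ℝ) 1, xiFn A p τ ≤ C * τ ^ γ := by
  have hγ : 0 < γ := pos_of_rpow_sub_mul_eq_zero (by linarith) hp hγ0 hγroot
  have hc : 0 < 1 - γ ^ (p - 1) :=
    sub_pos.2 (Real.rpow_lt_one hγ.le (lt_one_of_forall_root_le hA hp hγmin) (by linarith))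
  refine ⟨((1 - γ ^ (p - 1))⁻¹) ^ p⁻¹, by positivity, fun τ hτ ↦ ?_⟩
  refine Real.sSup_le ?_ (mul_nonneg (by positivity) (Real.rpow_nonneg hτ.1 γ))
  rintro _ ⟨f, hf, rfl⟩
  exact intervalIntegral_le_of_mem_calE (by linarith) hp hγ hc (sub_eq_zero.1 hγroot) hf hτ

/-- there is `C = C(A,p) > 0` with `ξ(τ) ≤ C τ^γ` for all `τ ∈ [0,1]`,
where `γ` is the smallest root of `φ(s) = s^p - A(1-p+ps)`. -/
theorem xi_power_bound (A p : ℝ) (hA : 1 < A) (hp : 1 < p)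
    [Fact (1 ≤ ENNReal.ofReal p)]
    (γ : ℝ) (hγ0 : 0 ≤ γ)
    (hγroot : γ ^ p - A * (1 - p + p * γ) = 0)
    (hγmin : ∀ s : ℝ, 0 ≤ s → s ^ p - A * (1 - p + p * s) = 0 → γ ≤ s) :
    ∃ C > (0:ℝ), ∀ τ ∈ Icc (0:ℝ) 1, xiFn A p τ ≤ C * τ ^ γ :=
  xi_power_bound_general A p hA hp γ hγ0 hγroot hγmin
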